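/- Let n ≥ 8 and let F₆ be the 4-graph on [n] with edge set {{1,2,i,j} : 3 ≤ i < j ≤ n} ∪ {{1,3,4,k} : 5 ≤ k ≤ n} ∪ {{1,3,5,l} : 6 ≤ l ≤ n} ∪ {{1,3,6,7}} ∪ {{1,4,5,l} : 6 ≤ l ≤ n} ∪ {{1,4,6,7}} ∪ {{1,5,6,7}} ∪ {{2,3,4,k} : 5 ≤ k ≤ n} ∪ {{2,3,5,l} : 6 ≤ l ≤ n} ∪ {{2,4,5,6}} ∪ {{2,4,5,7}}. Then λ(F₆) < 0.0169. -/

import Mathlib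

open Finset

/-- The Lagrangian of a hypergraph `G` with vertex set `[n] = {1, …, n}`. -/
noncomputable def lagN (n : ℕ) (G : Finset (Finset ℕ)) : ℝ :=
  sSup {v : ℝ | ∃ x : ℕ → ℝ, (∀ i, 0 ≤ x i) ∧ (∑ i ∈ Finset.Icc 1 n, x i) = 1 ∧
    v = ∑ e ∈ G, ∏ i ∈ e, x i}

/-- The edges `{a, b, i, j}` over all 2-element subsets `{i, j}` of `s`. -/
def pairsWith (a b : ℕ) (s : Finset ℕ) : Finset (Finset ℕ) :=
  (s.powersetCard 2).image (fun p => insert a (insert b p))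

/-- The edges `{a, i, j, k}` over all 3-element subsets `{i, j, k}` of `s`. -/
def triplesWith (a : ℕ) (s : Finset ℕ) : Finset (Finset ℕ) :=
  (s.powersetCard 3).image (insert a)

/-- The edges `{a, b, c, k}` over all `k ∈ s`. -/
def singlesWith (a b c : ℕ) (s : Finset ℕ) : Finset (Finset ℕ) :=
  s.image (fun k => ({a, b, c, k} : Finset ℕ))

/-- The 4-graph `F₆` on `[n]`. -/
def F6 (n : ℕ) : Finset (Finset ℕ) :=
  pairsWith 1 2 (Finset.Icc 3 n) ∪ singlesWith 1 3 4 (Finset.Icc 5 n) ∪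
    singlesWith 1 3 5 (Finset.Icc 6 n) ∪ {({1, 3, 6, 7} : Finset ℕ)} ∪
    singlesWith 1 4 5 (Finset.Icc 6 n) ∪ {({1, 4, 6, 7} : Finset ℕ)} ∪
    {({1, 5, 6, 7} : Finset ℕ)} ∪ singlesWith 2 3 4 (Finset.Icc 5 n) ∪
    singlesWith 2 3 5 (Finset.Icc 6 n) ∪ {({2, 4, 5, 6} : Finset ℕ)} ∪
    {({2, 4, 5, 7} : Finset ℕ)}

/-!
Put `p = x₁ + x₂` and let `t = 1 - p` be the weight of `{3, …, n}`. The edges through both `1`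
and `2` contribute at most `x₁x₂t²/2 ≤ p²t²/8`. Every other edge is `{1} ∪ T` or `{2} ∪ T` with
`T` in the link of vertex `1` (which contains the link of `2`). Writing `m = x₃ + x₄ + x₅` and
`s = t - m`, that link contributes at most `m³/27 + m²s/3 + ms²/4 ≤ 0.08 t³` per unit weight of
its apex, so `λ(F₆, x) ≤ p²t²/8 + 0.08 p t³ ≤ 0.0168`.
-/

/-- `λ(G, x)`. -/
noncomputable def lagPoly (G : Finset (Finset ℕ)) (x : ℕ → ℝ) : ℝ :=
  ∑ e ∈ G, ∏ i ∈ e, x i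

section lagPoly

variable {x : ℕ → ℝ}

theorem lagPoly_union_le (hx : ∀ i, 0 ≤ x i) (A B : Finset (Finset ℕ)) :
    lagPoly (A ∪ B) x ≤ lagPoly A x + lagPoly B x := by
  have hAB : 0 ≤ lagPoly (A ∩ B) x := sum_nonneg fun e _ ↦ prod_nonneg fun i _ ↦ hx i
  have := sum_union_inter (s₁ := A) (s₂ := B) (f := fun e ↦ ∏ i ∈ e, x i)
  simp only [lagPoly] at hAB ⊢
  linarith

theorem lagPoly_image_le {α : Type*} [DecidableEq α] (hx : ∀ i, 0 ≤ x i) (s : Finset α)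
    (f : α → Finset ℕ) : lagPoly (s.image f) x ≤ ∑ p ∈ s, ∏ i ∈ f p, x i :=
  sum_image_le_of_nonneg fun _ _ ↦ prod_nonneg fun i _ ↦ hx i

theorem lagPoly_singlesWith_le (hx : ∀ i, 0 ≤ x i) {a b c : ℕ} {s : Finset ℕ}
    (hab : a ≠ b) (hac : a ≠ c) (hbc : b ≠ c) (ha : a ∉ s) (hb : b ∉ s) (hc : c ∉ s) :
    lagPoly (singlesWith a b c s) x ≤ x a * x b * x c * ∑ k ∈ s, x k := by
  refine (lagPoly_image_le hx _ _).trans_eq ?_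
  rw [mul_sum]
  refine sum_congr rfl fun k hk ↦ ?_
  have hak : a ≠ k := (ne_of_mem_of_not_mem hk ha).symm
  have hbk : b ≠ k := (ne_of_mem_of_not_mem hk hb).symm
  have hck : c ≠ k := (ne_of_mem_of_not_mem hk hc).symm
  rw [prod_insert (by simp [hab, hac, hak]), prod_insert (by simp [hbc, hbk]), prod_pair hck]
  ring

theorem lagPoly_pairsWith_le (hx : ∀ i, 0 ≤ x i) {a b : ℕ} {s : Finset ℕ} (hab : a ≠ b)
    (ha : a ∉ s) (hb : b ∉ s) :
    lagPoly (pairsWith a b s) x ≤ x a * x b * lagPoly (s.powersetCard 2) x := by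
  refine (lagPoly_image_le hx _ _).trans_eq ?_
  rw [lagPoly, mul_sum]
  refine sum_congr rfl fun p hp ↦ ?_
  have hps := (mem_powersetCard.1 hp).1
  rw [prod_insert (by simpa [hab] using fun h ↦ ha (hps h)), prod_insert fun h ↦ hb (hps h),
    mul_assoc]

theorem two_mul_lagPoly_powersetCard_two_le (hx : ∀ i, 0 ≤ x i) (s : Finset ℕ) :
    2 * lagPoly (s.powersetCard 2) x ≤ (∑ i ∈ s, x i) ^ 2 := by
  induction s using Finset.induction_on with
  | empty => rw [powersetCard_eq_empty.2 (by simp)]; simp [lagPoly]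
  | insert a s ha ih =>
    have hlink : lagPoly ((s.powersetCard 1).image (insert a)) x ≤ x a * ∑ i ∈ s, x i := by
      refine (lagPoly_image_le hx _ _).trans_eq ?_
      rw [powersetCard_one, sum_map, mul_sum]
      refine sum_congr rfl fun i hi ↦ ?_
      simp [prod_pair (ne_of_mem_of_not_mem hi ha).symm]
    have hs : 0 ≤ ∑ i ∈ s, x i := sum_nonneg fun i _ ↦ hx i
    rw [powersetCard_succ_insert ha, sum_insert ha]
    nlinarith [lagPoly_union_le hx (s.powersetCard 2) ((s.powersetCard 1).image (insert a)), hx a]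

end lagPoly

theorem sum_Icc_add_one_eq_add {M : Type*} [AddCommMonoid M] (f : ℕ → M) {k m n : ℕ}
    (hkm : k ≤ m) (hmn : m ≤ n) :
    ∑ i ∈ Icc (k + 1) n, f i = ∑ i ∈ Icc (k + 1) m, f i + ∑ i ∈ Icc (m + 1) n, f i := by
  simp only [Icc_add_one_left_eq_Ioc]
  exact (sum_Ioc_consecutive f hkm hmn).symm

theorem lagN_le_of_forall {n : ℕ} (hn : 1 ≤ n) {G : Finset (Finset ℕ)} {c : ℝ}
    (h : ∀ x : ℕ → ℝ, (∀ i, 0 ≤ x i) → ∑ i ∈ Icc 1 n, x i = 1 → lagPoly G x ≤ c) :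
    lagN n G ≤ c := by
  refine csSup_le ⟨_, Pi.single 1 1, fun i ↦ ?_, ?_, rfl⟩ ?_
  · by_cases hi : i = 1 <;> simp [hi]
  · simp [sum_pi_single', hn]
  · rintro _ ⟨x, hx, hsum, rfl⟩
    exact h x hx hsum

theorem lagPoly_F6_le {x : ℕ → ℝ} (hx : ∀ i, 0 ≤ x i) (n : ℕ) :
    lagPoly (F6 n) x ≤ x 1 * x 2 * (∑ i ∈ Icc 3 n, x i) ^ 2 / 2
      + x 1 * x 3 * x 4 * ∑ i ∈ Icc 5 n, x i + x 1 * x 3 * x 5 * ∑ i ∈ Icc 6 n, x i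
      + x 1 * x 3 * x 6 * x 7 + x 1 * x 4 * x 5 * ∑ i ∈ Icc 6 n, x i + x 1 * x 4 * x 6 * x 7
      + x 1 * x 5 * x 6 * x 7 + x 2 * x 3 * x 4 * ∑ i ∈ Icc 5 n, x i
      + x 2 * x 3 * x 5 * ∑ i ∈ Icc 6 n, x i + x 2 * x 4 * x 5 * x 6 + x 2 * x 4 * x 5 * x 7 := by
  unfold F6
  repeat' refine (lagPoly_union_le hx _ _).trans (add_le_add ?_ ?_)
  · have hpairs := two_mul_lagPoly_powersetCard_two_le hx (Icc 3 n)
    refine (lagPoly_pairsWith_le hx (by simp) (by simp) (by simp)).trans ?_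
    nlinarith [mul_nonneg (hx 1) (hx 2)]
  all_goals first
    | exact lagPoly_singlesWith_le hx (by simp) (by simp) (by simp) (by simp) (by simp) (by simp)
    | simp [lagPoly, mul_assoc]

theorem F6_link_le {c d e f g r : ℝ} (hc : 0 ≤ c) (hd : 0 ≤ d) (he : 0 ≤ e) (hf : 0 ≤ f)
    (hg : 0 ≤ g) (hr : 0 ≤ r) :
    c * d * e + (c * d + c * e + d * e) * (f + g + r) + (c + d + e) * (f * g)
      ≤ 0.08 * (c + d + e + f + g + r) ^ 3 := by
  set m := c + d + e
  set s := f + g + r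
  have hm : 0 ≤ m := by positivity
  have hs : 0 ≤ s := by positivity
  have h3 : c * d * e ≤ m ^ 3 / 27 := by
    nlinarith [mul_nonneg hc (sq_nonneg (d - e)), mul_nonneg hd (sq_nonneg (c - e)),
      mul_nonneg he (sq_nonneg (c - d)), mul_nonneg hc (sq_nonneg (c - d)),
      mul_nonneg hd (sq_nonneg (d - e)), mul_nonneg he (sq_nonneg (c - e)),
      mul_nonneg hc (sq_nonneg (c - e)), mul_nonneg hd (sq_nonneg (c - d)),
      mul_nonneg he (sq_nonneg (d - e))]
  have h2 : c * d + c * e + d * e ≤ m ^ 2 / 3 := by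
    nlinarith [sq_nonneg (c - d), sq_nonneg (c - e), sq_nonneg (d - e)]
  have h1 : f * g ≤ s ^ 2 / 4 := by
    nlinarith [four_mul_le_sq_add f g, mul_nonneg (add_nonneg hf hg) hr]
  -- the maximum of `m³/27 + m²s/3 + ms²/4` on `m + s = 1` is `0.08`, attained at `m = 3/5`
  have hcubic : m ^ 3 / 27 + m ^ 2 / 3 * s + m * (s ^ 2 / 4) ≤ 0.08 * (m + s) ^ 3 := by
    nlinarith [mul_nonneg (sq_nonneg (2 * m - 3 * s)) hm,
      mul_nonneg (sq_nonneg (2 * m - 3 * s)) hs]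
  calc c * d * e + (c * d + c * e + d * e) * s + m * (f * g)
      ≤ m ^ 3 / 27 + m ^ 2 / 3 * s + m * (s ^ 2 / 4) := by gcongr
    _ ≤ 0.08 * (m + s) ^ 3 := hcubic
    _ = 0.08 * (c + d + e + f + g + r) ^ 3 := by ring

theorem F6_mass_split_le {p t : ℝ} (hp : 0 ≤ p) (ht : 0 ≤ t) (hpt : p + t = 1) :
    p ^ 2 * t ^ 2 / 8 + 0.08 * p * t ^ 3 ≤ 0.0168 := by
  obtain rfl : t = 1 - p := by linarith
  nlinarith [sq_nonneg (p - 0.3695), mul_nonneg hp ht, mul_nonneg hp (sq_nonneg (p - 0.3695)),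
    mul_nonneg ht (sq_nonneg (p - 0.3695))]

theorem F6_weight_le {a b c d e f g r : ℝ} (ha : 0 ≤ a) (hb : 0 ≤ b) (hc : 0 ≤ c) (hd : 0 ≤ d)
    (he : 0 ≤ e) (hf : 0 ≤ f) (hg : 0 ≤ g) (hr : 0 ≤ r)
    (hsum : a + b + c + d + e + f + g + r = 1) :
    a * b * (c + d + e + f + g + r) ^ 2 / 2
      + a * c * d * (e + f + g + r) + a * c * e * (f + g + r) + a * c * f * g
      + a * d * e * (f + g + r) + a * d * f * g + a * e * f * g + b * c * d * (e + f + g + r)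
      + b * c * e * (f + g + r) + b * d * e * f + b * d * e * g ≤ 0.0168 := by
  set t := c + d + e + f + g + r
  set link := c * d * e + (c * d + c * e + d * e) * (f + g + r) + (c + d + e) * (f * g)
  have hpair : a * b * t ^ 2 / 2 ≤ (a + b) ^ 2 * t ^ 2 / 8 := by
    nlinarith [four_mul_le_sq_add a b, sq_nonneg t]
  -- the link of vertex `2` is contained in the link of vertex `1`
  have hlinks : a * c * d * (e + f + g + r) + a * c * e * (f + g + r) + a * c * f * g
      + a * d * e * (f + g + r) + a * d * f * g + a * e * f * g + b * c * d * (e + f + g + r)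
      + b * c * e * (f + g + r) + b * d * e * f + b * d * e * g ≤ (a + b) * link := by
    have hslack : 0 ≤ b * (d * e * r + (c + d + e) * (f * g)) := by positivity
    linarith
  have hlink : (a + b) * link ≤ (a + b) * (0.08 * t ^ 3) := by
    gcongr
    exact F6_link_le hc hd he hf hg hr
  have hsplit := F6_mass_split_le (p := a + b) (t := t) (by positivity) (by positivity)
    (by linarith)
  linarith

theorem lagPoly_F6_le_of_sum_eq_one {n : ℕ} (hn : 8 ≤ n) {x : ℕ → ℝ} (hx : ∀ i, 0 ≤ x i)
    (hsum : ∑ i ∈ Icc 1 n, x i = 1) : lagPoly (F6 n) x ≤ 0.0168 := by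
  have tail (k : ℕ) (hk : k ≤ 7) : ∑ i ∈ Icc (k + 1) n, x i
      = ∑ i ∈ Icc (k + 1) 7, x i + ∑ i ∈ Icc 8 n, x i :=
    sum_Icc_add_one_eq_add x hk (by omega)
  have h1 := tail 0 (by norm_num)
  have h3 := tail 2 (by norm_num)
  have h5 := tail 4 (by norm_num)
  have h6 := tail 5 (by norm_num)
  simp only [zero_add, Nat.reduceAdd, sum_Icc_succ_top, Icc_self, sum_singleton,
    Nat.reduceLeDiff] at h1 h3 h5 h6
  have := lagPoly_F6_le hx n
  rw [h3, h5, h6] at this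
  exact this.trans (F6_weight_le (hx 1) (hx 2) (hx 3) (hx 4) (hx 5) (hx 6) (hx 7)
    (sum_nonneg fun i _ ↦ hx i) (by linarith))

/-- For `n ≥ 8`, `λ(F₆) < 0.0169`. -/
theorem lagrangian_F6 (n : ℕ) (hn : 8 ≤ n) :
    lagN n (F6 n) < 0.0169 :=
  (lagN_le_of_forall (by omega) fun _ hx hsum ↦ lagPoly_F6_le_of_sum_eq_one hn hx hsum).trans_lt
    (by norm_num)
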